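/- Fix an integer k ≥ 0 and R > 0, and define a(r) := R^{1/2}·I_{k+1/2}(r)/(r^{1/2}·I_{k+1/2}(R)) and b(r) := a(r) − (r/R)^k for r > 0. Then b(R) = 0, b satisfies b''(r) + (2/r)·b'(r) − (k(k+1)/r²)·b(r) = a(r) for all r > 0, and b'(R) = I_{k+3/2}(R)/I_{k+1/2}(R). -/

import Mathlib

/-- The modified Bessel function of the first kind of order `m`:
`I_m(r) = ∑ (r/2)^(m+2n) / (n! Γ(m+n+1))`. -/
noncomputable def besselI (m r : ℝ) : ℝ :=
  ∑' n : ℕ, (r / 2) ^ (m + 2 * (n : ℝ)) / ((n.factorial : ℝ) * Real.Gamma (m + (n : ℝ) + 1))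

/-- `a(r) = R^{1/2} I_{k+1/2}(r) / (r^{1/2} I_{k+1/2}(R))`. -/
noncomputable def afun (k : ℕ) (R r : ℝ) : ℝ :=
  R ^ ((1 : ℝ) / 2) * besselI ((k : ℝ) + 1 / 2) r
    / (r ^ ((1 : ℝ) / 2) * besselI ((k : ℝ) + 1 / 2) R)

/-- `b(r) = a(r) - (r/R)^k`. -/
noncomputable def bfun (k : ℕ) (R r : ℝ) : ℝ :=
  afun k R r - (r / R) ^ k

/-!
Write `I_ν(r) = (r/2)^ν F_ν(r²/4)` with the entire series `F_ν(x) = ∑ xⁿ / (n! Γ(ν+n+1))`.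
Termwise, `F_ν' = F_{ν+1}` and `F_ν = (ν+1) F_{ν+1} + x F_{ν+2}`, so `φ(r) = F_ν(r²/4)` solves
`φ'' + ((2ν+1)/r) φ' = φ`. For `ν = k + 1/2` the powers `r^{1/2}` cancel and
`b(r) = r^k ψ(r)` with `ψ = φ/(R^k φ(R)) - R^{-k}`. For any `u = r^k ψ` the operator
`u'' + (2/r) u' - k(k+1)/r² u` equals `r^k (ψ'' + (2(k+1)/r) ψ')`, which here is `r^k φ/(R^k φ(R)) = a`.
Finally `ψ(R) = 0` gives `b'(R) = φ'(R)/φ(R) = (R/2) F_{ν+1}/F_ν = I_{ν+1}(R)/I_ν(R)`.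
-/

open Filter Topology Nat Real

theorem hasDerivAt_tsum_mul_pow {c : ℕ → ℝ} (hc : ∀ x, Summable fun n => c n * x ^ n) (x : ℝ) :
    HasDerivAt (fun y => ∑' n, c n * y ^ n) (∑' n, (n + 1) * c (n + 1) * x ^ n) x := by
  set M := |x| + 1
  have hM : 1 ≤ M := by simp [M]
  have hxM : x ∈ Metric.ball (0 : ℝ) M := by simp [M]
  have hbound : ∀ n, ∀ y ∈ Metric.ball (0 : ℝ) M,
      ‖c n * (n * y ^ (n - 1))‖ ≤ |c n * (2 * M) ^ n| := by
    intro n y hy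
    rw [mem_ball_zero_iff, Real.norm_eq_abs] at hy
    calc ‖c n * (n * y ^ (n - 1))‖ = |c n| * (n * |y| ^ (n - 1)) := by simp
      _ ≤ |c n| * (2 ^ n * M ^ n) := by
          gcongr
          · exact_mod_cast n.lt_two_pow_self.le
          · calc |y| ^ (n - 1) ≤ M ^ (n - 1) := by gcongr
              _ ≤ M ^ n := pow_le_pow_right₀ hM (Nat.sub_le n 1)
      _ = |c n * (2 * M) ^ n| := by
          rw [abs_mul, abs_of_nonneg (by positivity : (0 : ℝ) ≤ (2 * M) ^ n), mul_pow]
  have h := hasDerivAt_tsum_of_isPreconnected (hc (2 * M)).abs Metric.isOpen_ball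
    (convex_ball (0 : ℝ) M).isPreconnected
    (fun n y _ => (hasDerivAt_pow n y).const_mul (c n)) hbound hxM (hc x) hxM
  have hsum := (hc (2 * M)).abs.of_norm_bounded fun n => hbound n x hxM
  refine h.congr_deriv ?_
  rw [hsum.tsum_eq_zero_add]
  simp [mul_comm, mul_left_comm]

noncomputable def besselCoeff (ν : ℝ) (n : ℕ) : ℝ := ((n ! : ℝ) * Gamma (ν + n + 1))⁻¹

/-- `besselI ν r = (r/2)^ν * besselSeries ν (r²/4)`; this is the regularized `₀F₁(; ν + 1; x)`. -/
noncomputable def besselSeries (ν x : ℝ) : ℝ := ∑' n, besselCoeff ν n * x ^ n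

section besselSeries

variable {ν : ℝ}

theorem factorial_mul_Gamma_le_Gamma_add_nat (hν : 0 ≤ ν) (n : ℕ) :
    n ! * Gamma (ν + 1) ≤ Gamma (ν + n + 1) := by
  induction n with
  | zero => simp
  | succ n ih =>
    have hn : (0 : ℝ) < ν + n + 1 := by positivity
    calc ((n + 1) ! : ℝ) * Gamma (ν + 1) = (n + 1) * (n ! * Gamma (ν + 1)) := by
          push_cast [Nat.factorial_succ]; ring
      _ ≤ (ν + n + 1) * Gamma (ν + n + 1) := by gcongr; linarith
      _ = Gamma (ν + ↑(n + 1) + 1) := by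
          rw [← Gamma_add_one hn.ne']; push_cast; ring_nf

theorem besselCoeff_pos (hν : 0 ≤ ν) (n : ℕ) : 0 < besselCoeff ν n := by
  have := Gamma_pos_of_pos (by positivity : 0 < ν + n + 1)
  unfold besselCoeff; positivity

theorem summable_besselCoeff_mul_pow (hν : 0 ≤ ν) (x : ℝ) :
    Summable fun n => besselCoeff ν n * x ^ n := by
  have hΓ := Gamma_pos_of_pos (by positivity : 0 < ν + 1)
  refine ((summable_pow_div_factorial |x|).mul_left (Gamma (ν + 1))⁻¹).of_norm_bounded
    fun n => ?_
  have hf : (1 : ℝ) ≤ n ! := by exact_mod_cast n.factorial_pos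
  rw [norm_mul, norm_pow, Real.norm_of_nonneg (besselCoeff_pos hν n).le, Real.norm_eq_abs,
    besselCoeff, div_eq_mul_inv, mul_comm _ (n ! : ℝ)⁻¹, ← mul_assoc, ← mul_inv,
    mul_comm _ (n ! : ℝ)]
  gcongr
  calc Gamma (ν + 1) ≤ n ! * Gamma (ν + 1) := le_mul_of_one_le_left hΓ.le hf
    _ ≤ Gamma (ν + n + 1) := factorial_mul_Gamma_le_Gamma_add_nat hν n

theorem succ_mul_besselCoeff_succ (ν : ℝ) (n : ℕ) :
    (n + 1) * besselCoeff ν (n + 1) = besselCoeff (ν + 1) n := by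
  rw [besselCoeff, besselCoeff, Nat.factorial_succ]
  push_cast
  rw [show ν + (n + 1) + 1 = ν + 1 + n + 1 by ring]
  field_simp

theorem besselCoeff_eq_mul_besselCoeff_add_one (hν : 0 ≤ ν) (n : ℕ) :
    besselCoeff ν n = (ν + n + 1) * besselCoeff (ν + 1) n := by
  have hn : ν + n + 1 ≠ 0 := by positivity
  rw [besselCoeff, besselCoeff, show ν + 1 + n + 1 = ν + n + 1 + 1 by ring, Gamma_add_one hn]
  field_simp

theorem hasDerivAt_besselSeries (hν : 0 ≤ ν) (x : ℝ) :
    HasDerivAt (besselSeries ν) (besselSeries (ν + 1) x) x := by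
  have h := hasDerivAt_tsum_mul_pow (summable_besselCoeff_mul_pow hν) x
  simp only [succ_mul_besselCoeff_succ] at h
  exact h

theorem besselSeries_eq_add (hν : 0 ≤ ν) (x : ℝ) :
    besselSeries ν x = (ν + 1) * besselSeries (ν + 1) x + x * besselSeries (ν + 2) x := by
  have h₁ := summable_besselCoeff_mul_pow hν x
  have h₂ := (summable_besselCoeff_mul_pow (by linarith : 0 ≤ ν + 1) x).mul_left (ν + 1)
  have hdiff : (fun n : ℕ => besselCoeff ν n * x ^ n - (ν + 1) * (besselCoeff (ν + 1) n * x ^ n))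
      = fun n : ℕ => n * besselCoeff (ν + 1) n * x ^ n := by
    ext n; rw [besselCoeff_eq_mul_besselCoeff_add_one hν]; ring
  have key : besselSeries ν x - (ν + 1) * besselSeries (ν + 1) x
      = x * besselSeries (ν + 2) x := by
    rw [besselSeries, besselSeries, besselSeries, ← tsum_mul_left, ← h₁.tsum_sub h₂, hdiff,
      ((h₁.sub h₂).congr (congrFun hdiff)).tsum_eq_zero_add, ← tsum_mul_left]
    simp only [CharP.cast_eq_zero, zero_mul, zero_add, Nat.cast_succ]
    congr 1; ext n
    rw [show ν + 2 = ν + 1 + 1 by ring, ← succ_mul_besselCoeff_succ (ν + 1) n]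
    ring
  linarith

theorem besselSeries_pos (hν : 0 ≤ ν) {x : ℝ} (hx : 0 ≤ x) : 0 < besselSeries ν x :=
  (summable_besselCoeff_mul_pow hν x).tsum_pos
    (fun n => mul_nonneg (besselCoeff_pos hν n).le (pow_nonneg hx n)) 0
    (by simpa using besselCoeff_pos hν 0)

theorem hasDerivAt_besselSeries_sq_div_four (hν : 0 ≤ ν) (s : ℝ) :
    HasDerivAt (fun s => besselSeries ν (s ^ 2 / 4))
      (s / 2 * besselSeries (ν + 1) (s ^ 2 / 4)) s := by
  refine ((hasDerivAt_besselSeries hν _).comp s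
    ((hasDerivAt_pow 2 s).div_const 4)).congr_deriv ?_
  norm_num
  ring

theorem hasDerivAt_half_mul_besselSeries_sq_div_four (hν : 0 ≤ ν) (s : ℝ) :
    HasDerivAt (fun s => s / 2 * besselSeries (ν + 1) (s ^ 2 / 4))
      (besselSeries (ν + 1) (s ^ 2 / 4) / 2 + s / 2 * (s / 2 * besselSeries (ν + 2) (s ^ 2 / 4))) s := by
  refine (((hasDerivAt_id' s).div_const 2).fun_mul
    (hasDerivAt_besselSeries_sq_div_four (by positivity) s)).congr_deriv ?_
  rw [show ν + 1 + 1 = ν + 2 by ring]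
  ring

end besselSeries

theorem besselI_eq_rpow_mul_besselSeries (ν : ℝ) {r : ℝ} (hr : 0 < r) :
    besselI ν r = (r / 2) ^ ν * besselSeries ν (r ^ 2 / 4) := by
  rw [besselI, besselSeries, ← tsum_mul_left]
  congr 1; ext n
  rw [rpow_add (by positivity), show 2 * (n : ℝ) = ((2 * n : ℕ) : ℝ) by push_cast; ring,
    rpow_natCast, pow_mul, besselCoeff]
  ring

theorem besselI_nat_add_half (k : ℕ) {r : ℝ} (hr : 0 < r) :
    besselI (k + 1 / 2) r
      = r ^ (1 / 2 : ℝ) / 2 ^ (k + 1 / 2 : ℝ) * (r ^ k * besselSeries (k + 1 / 2) (r ^ 2 / 4)) := by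
  rw [besselI_eq_rpow_mul_besselSeries _ hr, div_rpow hr.le zero_le_two, rpow_add hr,
    rpow_natCast]
  ring

theorem afun_eq_div {k : ℕ} {R r : ℝ} (hR : 0 < R) (hr : 0 < r) :
    afun k R r = r ^ k * besselSeries (k + 1 / 2) (r ^ 2 / 4)
      / (R ^ k * besselSeries (k + 1 / 2) (R ^ 2 / 4)) := by
  have hF := besselSeries_pos (by positivity : (0 : ℝ) ≤ k + 1 / 2) (by positivity : 0 ≤ R ^ 2 / 4)
  rw [afun, besselI_nat_add_half k hr, besselI_nat_add_half k hR]
  field_simp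

theorem bfun_eq_pow_mul {k : ℕ} {R s : ℝ} (hR : 0 < R) (hs : 0 < s) :
    bfun k R s = s ^ k * (besselSeries (k + 1 / 2) (s ^ 2 / 4)
      / (R ^ k * besselSeries (k + 1 / 2) (R ^ 2 / 4)) - (R ^ k)⁻¹) := by
  rw [bfun, afun_eq_div hR hs, div_pow]
  ring

theorem hasDerivAt_pow_of_ne_zero (k : ℕ) {r : ℝ} (hr : r ≠ 0) :
    HasDerivAt (fun s => s ^ k) (k * r ^ k / r) r := by
  refine (hasDerivAt_pow k r).congr_deriv ?_
  cases k with
  | zero => simp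
  | succ k => rw [pow_succ]; field_simp; simp

/-- The radial part of the Laplacian on `ℝ³` acting on `u(|x|) Y(x/|x|)`, with `Y` a spherical
harmonic of degree `k`. -/
noncomputable def sphericalRadialOp (k : ℕ) (u : ℝ → ℝ) (r : ℝ) : ℝ :=
  deriv (deriv u) r + 2 / r * deriv u r - k * (k + 1) / r ^ 2 * u r

section sphericalRadialOp

variable {k : ℕ} {u ψ : ℝ → ℝ} {r : ℝ}

theorem deriv_of_eq_pow_mul (hu : ∀ s, 0 < s → u s = s ^ k * ψ s) (hr : 0 < r) {ψ' : ℝ}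
    (hψ : HasDerivAt ψ ψ' r) : deriv u r = k * r ^ k / r * ψ r + r ^ k * ψ' := by
  have hev : u =ᶠ[𝓝 r] fun s => s ^ k * ψ s := eventually_of_mem (Ioi_mem_nhds hr) hu
  rw [hev.deriv_eq]
  exact ((hasDerivAt_pow_of_ne_zero k hr.ne').mul hψ).deriv

theorem sphericalRadialOp_of_eq_pow_mul (hu : ∀ s, 0 < s → u s = s ^ k * ψ s)
    {ψ' : ℝ → ℝ} {ψ'' : ℝ} (hψ : ∀ s, 0 < s → HasDerivAt ψ (ψ' s) s) (hr : 0 < r)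
    (hψ' : HasDerivAt ψ' ψ'' r) :
    sphericalRadialOp k u r = r ^ k * (ψ'' + 2 * (k + 1) / r * ψ' r) := by
  have hev : deriv u =ᶠ[𝓝 r] fun s => k * s ^ k / s * ψ s + s ^ k * ψ' s :=
    eventually_of_mem (Ioi_mem_nhds hr) fun s hs => deriv_of_eq_pow_mul hu hs (hψ s hs)
  have hpow := hasDerivAt_pow_of_ne_zero k hr.ne'
  have h := (((hpow.const_mul (k : ℝ)).fun_div (hasDerivAt_id' r) hr.ne').fun_mul
    (hψ r hr)).fun_add (hpow.fun_mul hψ')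
  rw [sphericalRadialOp, hev.deriv_eq, h.deriv, deriv_of_eq_pow_mul hu hr (hψ r hr), hu r hr]
  field_simp
  ring

end sphericalRadialOp

theorem stmt5 (k : ℕ) (R : ℝ) (hR : 0 < R) :
    bfun k R R = 0 ∧
    (∀ r : ℝ, 0 < r →
      deriv (deriv (bfun k R)) r + (2 / r) * deriv (bfun k R) r
        - ((k : ℝ) * ((k : ℝ) + 1) / r ^ 2) * bfun k R r = afun k R r) ∧
    deriv (bfun k R) R = besselI ((k : ℝ) + 3 / 2) R / besselI ((k : ℝ) + 1 / 2) R := by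
  have hν : (0 : ℝ) ≤ k + 1 / 2 := by positivity
  have hF : 0 < besselSeries (k + 1 / 2) (R ^ 2 / 4) := besselSeries_pos hν (by positivity)
  have hb (s : ℝ) (hs : 0 < s) := bfun_eq_pow_mul (k := k) hR hs
  have hψ (s : ℝ) := ((hasDerivAt_besselSeries_sq_div_four hν s).div_const
    (R ^ k * besselSeries (k + 1 / 2) (R ^ 2 / 4))).sub_const (R ^ k)⁻¹
  refine ⟨?_, fun r hr => ?_, ?_⟩
  · rw [hb R hR]
    -- otherwise `field_simp` rewrites `k + 1 / 2` inside some occurrences of `besselSeries` only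
    generalize (k : ℝ) + 1 / 2 = ν at hF ⊢
    field_simp
    ring
  · change sphericalRadialOp k (bfun k R) r = _
    rw [sphericalRadialOp_of_eq_pow_mul hb (fun s _ => hψ s) hr
        ((hasDerivAt_half_mul_besselSeries_sq_div_four hν r).div_const _),
      afun_eq_div hR hr, besselSeries_eq_add hν (r ^ 2 / 4)]
    generalize hν_def : (k : ℝ) + 1 / 2 = ν at hF ⊢
    field_simp
    rw [← hν_def]
    ring
  · rw [deriv_of_eq_pow_mul hb hR (hψ R), show (k : ℝ) + 3 / 2 = k + 1 / 2 + 1 by ring,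
      besselI_eq_rpow_mul_besselSeries _ hR, besselI_eq_rpow_mul_besselSeries _ hR,
      rpow_add_one (by positivity)]
    generalize (k : ℝ) + 1 / 2 = ν at hF ⊢
    field_simp
    ring
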